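/- arXiv:1802.09572 — 2 statements merged into one kernel-verified Lean document; each statement's English description precedes it below -/
import Mathlib

section
/- Let G and G_t = ∂G/∂t be continuous on (0,∞)×S^{n-1}, let φ_1, φ_2 : (0,∞)→(0,∞) be continuous, strictly increasing with φ_i(1)=1, φ_i(0+)=0, φ_i(∞)=∞, and suppose the left derivative (φ_1)'_l(1) exists and is positive. Let ρ_K, ρ_L ∈ C(S^{n-1}) be strictly positive, and for ε>0 let ρ_ε(u) be the unique positive solution of φ_1(ρ_K(u)/ρ_ε(u)) + ε φ_2(ρ_L(u)/ρ_ε(u)) = 1. Then lim_{ε→0+} (1/ε)(∫ G(ρ_ε(u),u) du − ∫ G(ρ_K(u),u) du) = (1/(φ_1)'_l(1)) ∫_{S^{n-1}} φ_2(ρ_L(u)/ρ_K(u)) ρ_K(u) G_t(ρ_K(u),u) du. -/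
/-
Write `t = ρK / ρε < 1`. The defining equation reads `1 - φ₁ t = ε φ₂ (ρL / ρε)`, and the left
derivative of `φ₁` at `1` gives `1 - t ≤ C (1 - φ₁ t)` on `(0, 1)`. Hence `ρε - ρK = O(ε)`
uniformly on the sphere, and `(ρε - ρK) / ε → ρK φ₂ (ρL / ρK) / (φ₁)'_l(1)` pointwise. The chain
rule for `G (·, u)` gives the pointwise limit of the difference quotients of the integrand, the
mean value theorem bounds them uniformly, and dominated convergence concludes: the sphere has finite
`(n - 1)`-dimensional Hausdorff measure, being covered by the radial projections of the `2n` faces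
of the cube, which are Lipschitz images of a cube of dimension `n - 1`.
-/

open MeasureTheory Metric Set Filter
open scoped RealInnerProductSpace NNReal ENNReal Topology

noncomputable section

abbrev Euc (n : ℕ) := EuclideanSpace ℝ (Fin n)

def usphere (n : ℕ) : Set (Euc n) := Metric.sphere 0 1

def smeas (n : ℕ) : Measure (Euc n) := (μH[(n : ℝ) - 1]).restrict (usphere n)

lemma lipschitzOnWith_inv_norm_smul {E : Type*} [NormedAddCommGroup E] [NormedSpace ℝ E] :
    LipschitzOnWith 2 (fun x : E => ‖x‖⁻¹ • x) {x | 1 ≤ ‖x‖} := by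
  have key : ∀ x y : E, 1 ≤ ‖y‖ → ‖y‖ ≤ ‖x‖ →
      ‖‖x‖⁻¹ • x - ‖y‖⁻¹ • y‖ ≤ 2 * ‖x - y‖ := by
    intro x y hy hyx
    have hx : 1 ≤ ‖x‖ := hy.trans hyx
    have hy0 : 0 < ‖y‖ := one_pos.trans_le hy
    have hsplit : ‖x‖⁻¹ • x - ‖y‖⁻¹ • y = ‖x‖⁻¹ • (x - y) + (‖x‖⁻¹ - ‖y‖⁻¹) • y := by
      rw [smul_sub, sub_smul]; abel
    have h₁ : ‖‖x‖⁻¹ • (x - y)‖ ≤ ‖x - y‖ := by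
      rw [norm_smul, norm_inv, norm_norm]
      exact mul_le_of_le_one_left (norm_nonneg _) (inv_le_one_of_one_le₀ hx)
    have h₂ : ‖(‖x‖⁻¹ - ‖y‖⁻¹) • y‖ ≤ ‖x - y‖ := by
      have : ‖(‖x‖⁻¹ - ‖y‖⁻¹) • y‖ = (‖x‖ - ‖y‖) / ‖x‖ := by
        rw [norm_smul, Real.norm_eq_abs, abs_of_nonpos (sub_nonpos.2 (inv_anti₀ hy0 hyx))]
        field_simp
        ring
      rw [this]
      exact (div_le_self (sub_nonneg.2 hyx) hx).trans (norm_sub_norm_le x y)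
    rw [hsplit, two_mul]
    exact (norm_add_le _ _).trans (add_le_add h₁ h₂)
  refine LipschitzOnWith.of_dist_le_mul fun x hx y hy => ?_
  rw [dist_eq_norm, dist_eq_norm, NNReal.coe_ofNat]
  rcases le_total ‖y‖ ‖x‖ with h | h
  · exact key x y hy h
  · rw [norm_sub_rev, norm_sub_rev x]; exact key y x hx h

def cubeFace {m : ℕ} (i : Fin (m + 1)) (c : ℝ) (y : Fin m → ℝ) : Euc (m + 1) :=
  WithLp.toLp 2 (i.insertNth c y)

lemma exists_lipschitzWith_cubeFace {m : ℕ} (i : Fin (m + 1)) (c : ℝ) :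
    ∃ K, LipschitzWith K (cubeFace i c) := by
  have hins : LipschitzWith 1 (i.insertNth (α := fun _ => ℝ) c) :=
    LipschitzWith.of_dist_le_mul fun y y' => by simp [Fin.dist_insertNth_insertNth]
  exact ⟨_, (PiLp.lipschitzWith_toLp 2 (fun _ : Fin (m + 1) => ℝ)).comp hins⟩

lemma sphere_subset_biUnion_cubeFace (m : ℕ) :
    sphere (0 : Euc (m + 1)) 1 ⊆ ⋃ p ∈ (univ ×ˢ {-1, 1} : Set (Fin (m + 1) × ℝ)),
      (fun x => ‖x‖⁻¹ • x) '' (cubeFace p.1 p.2 '' Icc (-1) 1) := by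
  intro u hu
  rw [mem_sphere_zero_iff_norm] at hu
  obtain ⟨i, -, hi⟩ := Finset.univ.exists_max_image (fun j => |u j|) Finset.univ_nonempty
  have hs : 0 < |u i| := by
    by_contra! h
    have : u = 0 := by
      ext j
      exact abs_nonpos_iff.1 ((hi j (Finset.mem_univ j)).trans h)
    simp [this] at hu
  set x : Euc (m + 1) := |u i|⁻¹ • u with hx
  have hxj : ∀ j, |x j| = |u j| / |u i| := fun j => by
    simp [hx, abs_mul, div_eq_inv_mul]
  have hxi : |x i| = 1 := by rw [hxj, div_self hs.ne']
  have hxle : ∀ j, |x j| ≤ 1 := fun j => by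
    rw [hxj, div_le_one hs]; exact hi j (Finset.mem_univ j)
  refine mem_biUnion (x := (i, x i)) ⟨mem_univ i, ?_⟩ ⟨x, ⟨i.removeNth x, ?_, ?_⟩, ?_⟩
  · rcases abs_eq zero_le_one |>.1 hxi with h | h <;> simp [h]
  · exact ⟨fun k => (abs_le.1 (hxle _)).1, fun k => (abs_le.1 (hxle _)).2⟩
  · exact congrArg (WithLp.toLp 2) (Fin.insertNth_self_removeNth i x.ofLp)
  · simp only [hx, norm_smul, hu, norm_inv, Real.norm_eq_abs, abs_abs, mul_one, inv_inv, smul_smul,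
      mul_inv_cancel₀ hs.ne', one_smul]

lemma LipschitzOnWith.hausdorffMeasure_image_lt_top {X Y : Type*} [EMetricSpace X]
    [EMetricSpace Y] [MeasurableSpace X] [BorelSpace X] [MeasurableSpace Y] [BorelSpace Y]
    {K : ℝ≥0} {f : X → Y} {s : Set X} {d : ℝ} (hf : LipschitzOnWith K f s) (hd : 0 ≤ d)
    (hs : μH[d] s < ∞) : μH[d] (f '' s) < ∞ :=
  (hf.hausdorffMeasure_image_le hd).trans_lt
    (ENNReal.mul_lt_top (ENNReal.rpow_lt_top_of_nonneg hd ENNReal.coe_ne_top) hs)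

lemma hausdorffMeasure_sphere_lt_top (m : ℕ) : μH[m] (sphere (0 : Euc (m + 1)) 1) < ∞ := by
  refine (measure_mono (sphere_subset_biUnion_cubeFace m)).trans_lt
    (measure_biUnion_lt_top (finite_univ.prod (toFinite _)) fun p hp => ?_)
  obtain ⟨K, hK⟩ := exists_lipschitzWith_cubeFace p.1 p.2
  have hbox : μH[m] (Icc (-1 : Fin m → ℝ) 1) < ∞ := by
    have : (μH[m] : Measure (Fin m → ℝ)) = volume := by
      simpa using hausdorffMeasure_pi_real (ι := Fin m)
    exact this ▸ isCompact_Icc.measure_lt_top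
  have hface : cubeFace p.1 p.2 '' Icc (-1) 1 ⊆ {x | 1 ≤ ‖x‖} := by
    rintro _ ⟨y, -, rfl⟩
    have hc : |p.2| = 1 := by rcases hp.2 with h | h <;> rw [show p.2 = _ from h] <;> norm_num
    simpa [cubeFace, hc] using PiLp.norm_apply_le (cubeFace p.1 p.2 y) p.1
  exact (lipschitzOnWith_inv_norm_smul.mono hface).hausdorffMeasure_image_lt_top m.cast_nonneg
    ((hK.lipschitzOnWith (s := Icc (-1) 1)).hausdorffMeasure_image_lt_top m.cast_nonneg hbox)

lemma hausdorffMeasure_usphere_ne_top (n : ℕ) : μH[(n : ℝ) - 1] (usphere n) ≠ ∞ := by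
  cases n with
  | zero => simp [usphere, sphere_eq_empty_of_subsingleton one_ne_zero]
  | succ m => simpa [usphere] using (hausdorffMeasure_sphere_lt_top m).ne

lemma exists_one_sub_le_mul_one_sub {φ : ℝ → ℝ} {d : ℝ} (hφ : StrictMonoOn φ (Ioi 0))
    (hφ1 : φ 1 = 1) (hd : 0 < d) (hderiv : HasDerivWithinAt φ d (Iio 1) 1) :
    ∃ C > 0, ∀ t ∈ Ioo (0 : ℝ) 1, 1 - t ≤ C * (1 - φ t) := by
  have hslope : ∀ᶠ t in 𝓝[<] 1, d / 2 < slope φ 1 t :=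
    ((hasDerivWithinAt_iff_tendsto_slope' self_notMem_Iio).1 hderiv).eventually
      (lt_mem_nhds (half_lt_self hd))
  obtain ⟨l, hl1, hl⟩ := mem_nhdsLT_iff_exists_Ioo_subset.1 hslope
  set s := max l (1 / 2)
  have hs0 : 0 < s := lt_max_of_lt_right one_half_pos
  have hs1 : s < 1 := max_lt hl1 one_half_lt_one
  have hφs : φ s < 1 := hφ1 ▸ hφ hs0 (mem_Ioi.2 one_pos) hs1
  refine ⟨2 / d + 1 / (1 - φ s), add_pos (by positivity) (one_div_pos.2 (sub_pos.2 hφs)),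
    fun t ⟨ht0, ht1⟩ => ?_⟩
  have hφt : φ t < 1 := hφ1 ▸ hφ ht0 (mem_Ioi.2 one_pos) ht1
  have h2d : 0 ≤ 2 / d * (1 - φ t) := by have := sub_pos.2 hφt; positivity
  have hη : 0 ≤ 1 / (1 - φ s) * (1 - φ t) := by
    have := sub_pos.2 hφt; have := sub_pos.2 hφs; positivity
  rw [add_mul]
  rcases le_or_gt t s with hts | hst
  · have : 1 - φ s ≤ 1 - φ t := sub_le_sub_left (hφ.monotoneOn ht0 hs0 hts) 1
    have : 1 ≤ 1 / (1 - φ s) * (1 - φ t) := by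
      rw [one_div_mul_eq_div, one_le_div (sub_pos.2 hφs)]; exact this
    linarith
  · have hlt : d / 2 < (1 - φ t) / (1 - t) := by
      have : d / 2 < slope φ 1 t := hl ⟨(le_max_left _ _).trans_lt hst, ht1⟩
      rwa [slope_def_field, hφ1, ← neg_div_neg_eq (φ t - 1), neg_sub, neg_sub] at this
    rw [lt_div_iff₀ (sub_pos.2 ht1)] at hlt
    have : 1 - t ≤ 2 / d * (1 - φ t) := by
      rw [div_mul_eq_mul_div, le_div_iff₀ hd]; linarith
    linarith

section ImplicitEquation

variable {φ1 φ2 : ℝ → ℝ} {a b d ε r : ℝ}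

lemma lt_of_add_mul_eq_one (hφ1 : StrictMonoOn φ1 (Ioi 0)) (hφ1one : φ1 1 = 1)
    (hφ2pos : ∀ t > 0, 0 < φ2 t) (hb : 0 < b) (hε : 0 < ε) (hr : 0 < r)
    (h : φ1 (a / r) + ε * φ2 (b / r) = 1) : a < r := by
  by_contra! hra
  have h1 : 1 ≤ φ1 (a / r) := hφ1one ▸ hφ1.monotoneOn (mem_Ioi.2 one_pos)
    (mem_Ioi.2 (one_pos.trans_le ((one_le_div hr).2 hra))) ((one_le_div hr).2 hra)
  linarith [mul_pos hε (hφ2pos _ (div_pos hb hr))]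

lemma one_sub_div_le_of_add_mul_eq_one (hφ2 : MonotoneOn φ2 (Ioi 0)) {C : ℝ} (hC0 : 0 ≤ C)
    (hC : ∀ t ∈ Ioo (0 : ℝ) 1, 1 - t ≤ C * (1 - φ1 t)) (ha : 0 < a) (hb : 0 < b)
    (hε : 0 < ε) (har : a < r) (h : φ1 (a / r) + ε * φ2 (b / r) = 1) :
    1 - a / r ≤ ε * (C * φ2 (b / a)) := by
  have hr := ha.trans har
  calc 1 - a / r ≤ C * (1 - φ1 (a / r)) := hC _ ⟨div_pos ha hr, (div_lt_one hr).2 har⟩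
    _ = C * (ε * φ2 (b / r)) := by rw [← h]; ring
    _ ≤ C * (ε * φ2 (b / a)) := by
      gcongr
      exact hφ2 (div_pos hb hr) (div_pos hb ha) (div_le_div_of_nonneg_left hb.le ha har.le)
    _ = ε * (C * φ2 (b / a)) := by ring

lemma le_two_mul_of_one_sub_div_le {δ : ℝ} (ha : 0 < a) (har : a < r) (h : 1 - a / r ≤ δ)
    (hδ : δ ≤ 1 / 2) : r ≤ 2 * a ∧ r - a ≤ 2 * a * δ := by
  have hr := ha.trans har
  have hsub : r - a = r * (1 - a / r) := by field_simp
  have hr2 : r ≤ 2 * a := by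
    have : 1 / 2 ≤ a / r := by linarith
    rw [le_div_iff₀ hr] at this; linarith
  refine ⟨hr2, hsub ▸ (mul_le_mul_of_nonneg_left h hr.le).trans ?_⟩
  exact mul_le_mul_of_nonneg_right hr2 ((sub_nonneg.2 ((div_le_one hr).2 har.le)).trans h)

lemma strictAntiOn_add_mul_div (hφ1 : StrictMonoOn φ1 (Ioi 0)) (hφ2 : MonotoneOn φ2 (Ioi 0))
    (ha : 0 < a) (hb : 0 < b) (hε : 0 ≤ ε) :
    StrictAntiOn (fun s => φ1 (a / s) + ε * φ2 (b / s)) (Ioi 0) := by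
  intro s hs t ht hst
  have h1 := hφ1 (div_pos ha ht) (div_pos ha hs) (div_lt_div_of_pos_left ha hs hst)
  have h2 := hφ2 (div_pos hb ht) (div_pos hb hs) (div_le_div_of_nonneg_left hb.le hs hst.le)
  linarith [mul_le_mul_of_nonneg_left h2 hε]

variable {ρ : ℝ → ℝ}

lemma tendsto_div_of_add_mul_eq_one (hφ1 : StrictMonoOn φ1 (Ioi 0)) (hφ1one : φ1 1 = 1)
    (hd : 0 < d) (hderiv : HasDerivWithinAt φ1 d (Iio 1) 1) (hφ2 : MonotoneOn φ2 (Ioi 0))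
    (hφ2pos : ∀ t > 0, 0 < φ2 t) (ha : 0 < a) (hb : 0 < b)
    (hρ : ∀ ε > 0, 0 < ρ ε ∧ φ1 (a / ρ ε) + ε * φ2 (b / ρ ε) = 1) :
    Tendsto (fun ε => a / ρ ε) (𝓝[>] 0) (𝓝[<] 1) := by
  obtain ⟨C, hC0, hC⟩ := exists_one_sub_le_mul_one_sub hφ1 hφ1one hd hderiv
  have hlt : ∀ ε > 0, a < ρ ε := fun ε hε =>
    lt_of_add_mul_eq_one hφ1 hφ1one hφ2pos hb hε (hρ ε hε).1 (hρ ε hε).2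
  have hlower : Tendsto (fun ε => 1 - ε * (C * φ2 (b / a))) (𝓝[>] 0) (𝓝 1) := by
    have : Tendsto (fun ε => 1 - ε * (C * φ2 (b / a))) (𝓝 0) (𝓝 (1 - 0 * (C * φ2 (b / a)))) :=
      tendsto_const_nhds.sub (tendsto_id.mul_const _)
    simpa using this.mono_left nhdsWithin_le_nhds
  refine tendsto_nhdsWithin_iff.2 ⟨tendsto_of_tendsto_of_tendsto_of_le_of_le' hlower
    tendsto_const_nhds ?_ ?_, ?_⟩ <;> refine eventually_nhdsWithin_of_forall fun ε hε => ?_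
  · linarith [one_sub_div_le_of_add_mul_eq_one hφ2 hC0.le hC ha hb hε (hlt ε hε) (hρ ε hε).2]
  · exact (div_lt_one (hρ ε hε).1).2 (hlt ε hε) |>.le
  · exact (div_lt_one (hρ ε hε).1).2 (hlt ε hε)

lemma tendsto_sub_div_of_add_mul_eq_one (hφ1 : StrictMonoOn φ1 (Ioi 0)) (hφ1one : φ1 1 = 1)
    (hd : 0 < d) (hderiv : HasDerivWithinAt φ1 d (Iio 1) 1) (hφ2c : ContinuousOn φ2 (Ioi 0))
    (hφ2 : MonotoneOn φ2 (Ioi 0)) (hφ2pos : ∀ t > 0, 0 < φ2 t) (ha : 0 < a) (hb : 0 < b)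
    (hρ : ∀ ε > 0, 0 < ρ ε ∧ φ1 (a / ρ ε) + ε * φ2 (b / ρ ε) = 1) :
    Tendsto ρ (𝓝[>] 0) (𝓝[>] a) ∧
      Tendsto (fun ε => (ρ ε - a) / ε) (𝓝[>] 0) (𝓝 (a * φ2 (b / a) / d)) := by
  have ht := tendsto_div_of_add_mul_eq_one hφ1 hφ1one hd hderiv hφ2 hφ2pos ha hb hρ
  have hlt : ∀ ε > 0, a < ρ ε := fun ε hε =>
    lt_of_add_mul_eq_one hφ1 hφ1one hφ2pos hb hε (hρ ε hε).1 (hρ ε hε).2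
  have hρa : Tendsto ρ (𝓝[>] 0) (𝓝 a) := by
    have := (tendsto_const_nhds (x := a)).div (ht.mono_right nhdsWithin_le_nhds) one_ne_zero
    rw [div_one] at this
    exact this.congr' (eventually_nhdsWithin_of_forall fun _ _ => div_div_cancel₀ ha.ne')
  have hslope : Tendsto (fun ε => slope φ1 1 (a / ρ ε)) (𝓝[>] 0) (𝓝 d) :=
    ((hasDerivWithinAt_iff_tendsto_slope' self_notMem_Iio).1 hderiv).comp ht
  have hφ2ρ : Tendsto (fun ε => φ2 (b / ρ ε)) (𝓝[>] 0) (𝓝 (φ2 (b / a))) :=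
    (hφ2c.continuousAt (Ioi_mem_nhds (div_pos hb ha))).tendsto.comp
      (tendsto_const_nhds.div hρa ha.ne')
  refine ⟨tendsto_nhdsWithin_iff.2 ⟨hρa, eventually_nhdsWithin_of_forall hlt⟩,
    ((hρa.mul hφ2ρ).div hslope hd.ne').congr' (eventually_nhdsWithin_of_forall fun ε hε => ?_)⟩
  -- `φ1 (a / ρ) = 1 - ε φ2 (b / ρ)` turns the slope of `φ1` at `1` into `ε ρ φ2 (b / ρ) / (ρ - a)`
  obtain ⟨hr, heq⟩ := hρ ε hε
  have hφ2r : φ2 (b / ρ ε) ≠ 0 := (hφ2pos _ (div_pos hb hr)).ne'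
  have hra : ρ ε - a ≠ 0 := (sub_pos.2 (hlt ε hε)).ne'
  have hε0 : ε ≠ 0 := ne_of_gt hε
  simp only [Pi.div_apply]
  rw [slope_def_field, hφ1one, show φ1 (a / ρ ε) = 1 - ε * φ2 (b / ρ ε) by linarith]
  field_simp
  ring

end ImplicitEquation

lemma HasDerivAt.tendsto_comp_sub_div {g : ℝ → ℝ} {g' a L : ℝ} {l : Filter ℝ} {ρ c : ℝ → ℝ}
    (hg : HasDerivAt g g' a) (hρ : Tendsto ρ l (𝓝[≠] a))
    (hL : Tendsto (fun x => (ρ x - a) / c x) l (𝓝 L)) :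
    Tendsto (fun x => (g (ρ x) - g a) / c x) l (𝓝 (g' * L)) := by
  refine (((hasDerivAt_iff_tendsto_slope.1 hg).comp hρ).mul hL).congr fun x => ?_
  have := sub_smul_slope g a (ρ x)
  rw [smul_eq_mul, vsub_eq_sub] at this
  rw [Function.comp_apply, ← this]
  ring

lemma continuousOn_of_strictAntiOn_of_apply_eq {X : Type*} [TopologicalSpace X] {S : Set X}
    {F : X → ℝ → ℝ} {ρ : X → ℝ} {c : ℝ} (hF : ∀ s > 0, ContinuousOn (fun u => F u s) S)
    (hanti : ∀ u ∈ S, StrictAntiOn (F u) (Ioi 0)) (hρ : ∀ u ∈ S, 0 < ρ u ∧ F u (ρ u) = c) :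
    ContinuousOn ρ S := by
  intro u₀ hu₀
  obtain ⟨h0, heq0⟩ := hρ u₀ hu₀
  refine tendsto_order.2 ⟨fun s hs => ?_, fun s hs => ?_⟩
  · set s' := max s (ρ u₀ / 2)
    have hs'0 : 0 < s' := lt_max_of_lt_right (half_pos h0)
    have hc : c < F u₀ s' := heq0 ▸ hanti u₀ hu₀ hs'0 h0 (max_lt hs (half_lt_self h0))
    filter_upwards [(hF s' hs'0 u₀ hu₀).eventually_const_lt hc, self_mem_nhdsWithin]
      with u hu hS
    obtain ⟨hpos, heq⟩ := hρ u hS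
    exact (le_max_left _ _).trans_lt (((hanti u hS).lt_iff_gt hpos hs'0).1 (heq ▸ hu))
  · have hs0 := h0.trans hs
    have hc : F u₀ s < c := heq0 ▸ hanti u₀ hu₀ h0 hs0 hs
    filter_upwards [(hF s hs0 u₀ hu₀).eventually_lt_const hc, self_mem_nhdsWithin] with u hu hS
    obtain ⟨hpos, heq⟩ := hρ u hS
    exact ((hanti u hS).lt_iff_gt hs0 hpos).1 (heq ▸ hu)

lemma tendsto_integral_sub_div {X : Type*} [MeasurableSpace X] {μ : Measure X} [IsFiniteMeasure μ]
    {l : Filter ℝ} [l.IsCountablyGenerated] {F : ℝ → X → ℝ} {f g : X → ℝ} {M : ℝ}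
    (hF : ∀ᶠ ε in l, Integrable (F ε) μ) (hf : Integrable f μ)
    (hbound : ∀ᶠ ε in l, ∀ᵐ u ∂μ, ‖(F ε u - f u) / ε‖ ≤ M)
    (hlim : ∀ᵐ u ∂μ, Tendsto (fun ε => (F ε u - f u) / ε) l (𝓝 (g u))) :
    Tendsto (fun ε => ((∫ u, F ε u ∂μ) - ∫ u, f u ∂μ) / ε) l (𝓝 (∫ u, g u ∂μ)) := by
  refine (tendsto_integral_filter_of_dominated_convergence (fun _ => M)
    (hF.mono fun ε h => ((h.sub hf).div_const ε).aestronglyMeasurable) hbound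
    (integrable_const M) hlim).congr' (hF.mono fun ε h => ?_)
  simp only [Pi.sub_apply]
  rw [integral_div, integral_sub h hf]

lemma IsCompact.exists_forall_norm_le_of_mem_Icc_mul {X E : Type*} [TopologicalSpace X]
    [SeminormedAddCommGroup E] {S : Set X} (hS : IsCompact S) {F : ℝ → X → E}
    (hF : ContinuousOn (fun p : ℝ × X => F p.1 p.2) (Ioi 0 ×ˢ S)) {ρ : X → ℝ}
    (hρ : ContinuousOn ρ S) (hρpos : ∀ u ∈ S, 0 < ρ u) (c : ℝ) :
    ∃ B, ∀ u ∈ S, ∀ t ∈ Icc (ρ u) (c * ρ u), ‖F t u‖ ≤ B := by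
  have hcont : ContinuousOn (fun p : ℝ × X => F (p.1 * ρ p.2) p.2) (Icc 1 c ×ˢ S) :=
    hF.comp ((continuousOn_fst.mul (hρ.comp continuousOn_snd fun p hp => hp.2)).prodMk
      continuousOn_snd) fun p hp => ⟨mul_pos (one_pos.trans_le hp.1.1) (hρpos _ hp.2), hp.2⟩
  obtain ⟨B, hB⟩ := (isCompact_Icc.prod hS).exists_bound_of_continuousOn hcont
  refine ⟨B, fun u hu t ht => ?_⟩
  have hρu := hρpos u hu
  simpa [div_mul_cancel₀ t hρu.ne'] using hB (t / ρ u, u)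
    ⟨⟨(le_div_iff₀ hρu).2 (by linarith [ht.1]), (div_le_iff₀ hρu).2 ht.2⟩, hu⟩

lemma exists_forall_norm_sub_div_le {X : Type*} [TopologicalSpace X] {S : Set X}
    (hS : IsCompact S) {G Gt : ℝ → X → ℝ}
    (hGt : ContinuousOn (fun p : ℝ × X => Gt p.1 p.2) (Ioi 0 ×ˢ S))
    (hGtderiv : ∀ t ∈ Ioi (0 : ℝ), ∀ u ∈ S, HasDerivAt (fun s => G s u) (Gt t u) t)
    {φ1 φ2 : ℝ → ℝ} (hφ1 : StrictMonoOn φ1 (Ioi 0)) (hφ1one : φ1 1 = 1) {d : ℝ} (hd : 0 < d)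
    (hderiv : HasDerivWithinAt φ1 d (Iio 1) 1) (hφ2c : ContinuousOn φ2 (Ioi 0))
    (hφ2 : MonotoneOn φ2 (Ioi 0)) (hφ2pos : ∀ t > 0, 0 < φ2 t) {ρK ρL : X → ℝ}
    (hρK : ContinuousOn ρK S) (hρKpos : ∀ u ∈ S, 0 < ρK u)
    (hρL : ContinuousOn ρL S) (hρLpos : ∀ u ∈ S, 0 < ρL u) {ρe : ℝ → X → ℝ}
    (hρe : ∀ ε > 0, ∀ u ∈ S, 0 < ρe ε u ∧ φ1 (ρK u / ρe ε u) + ε * φ2 (ρL u / ρe ε u) = 1) :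
    ∃ M, ∀ᶠ ε in 𝓝[>] 0, ∀ u ∈ S, ‖(G (ρe ε u) u - G (ρK u) u) / ε‖ ≤ M := by
  obtain ⟨C, hC0, hC⟩ := exists_one_sub_le_mul_one_sub hφ1 hφ1one hd hderiv
  obtain ⟨Φ, hΦ⟩ := hS.exists_bound_of_continuousOn (hφ2c.comp
    (hρL.div hρK fun u hu => (hρKpos u hu).ne') fun u hu => div_pos (hρLpos u hu) (hρKpos u hu))
  obtain ⟨A, hA⟩ := hS.exists_bound_of_continuousOn hρK
  obtain ⟨B, hB⟩ := hS.exists_forall_norm_le_of_mem_Icc_mul hGt hρK hρKpos 2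
  have hsmall : ∀ᶠ ε in 𝓝[>] (0 : ℝ), ε * (C * Φ) ≤ 1 / 2 := by
    have : Tendsto (fun ε : ℝ => ε * (C * Φ)) (𝓝[>] 0) (𝓝 0) := by
      simpa using (tendsto_id.mul_const (C * Φ)).mono_left (nhdsWithin_le_nhds (a := (0 : ℝ)))
    exact this.eventually_le_const one_half_pos
  refine ⟨B * (2 * A * (C * Φ)), ?_⟩
  filter_upwards [hsmall, self_mem_nhdsWithin] with ε hεsmall hε u hu
  obtain ⟨hr, heq⟩ := hρe ε hε u hu
  have hKu := hρKpos u hu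
  have har := lt_of_add_mul_eq_one hφ1 hφ1one hφ2pos (hρLpos u hu) hε hr heq
  have hδ : 1 - ρK u / ρe ε u ≤ ε * (C * Φ) :=
    (one_sub_div_le_of_add_mul_eq_one hφ2 hC0.le hC hKu (hρLpos u hu) hε har heq).trans
      (mul_le_mul_of_nonneg_left (mul_le_mul_of_nonneg_left
        ((Real.le_norm_self _).trans (hΦ u hu)) hC0.le) hε.le)
  obtain ⟨hr2, hsub⟩ := le_two_mul_of_one_sub_div_le hKu har hδ hεsmall
  have hmvt : ‖G (ρe ε u) u - G (ρK u) u‖ ≤ B * (ρe ε u - ρK u) :=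
    norm_image_sub_le_of_norm_deriv_le_segment' (f := fun s => G s u)
      (fun t ht => (hGtderiv t (hKu.trans_le ht.1) u hu).hasDerivWithinAt)
      (fun t ht => hB u hu t ⟨ht.1, ht.2.le.trans hr2⟩) _ ⟨har.le, le_rfl⟩
  have hB0 : 0 ≤ B := (norm_nonneg _).trans (hB u hu _ ⟨le_rfl, by linarith⟩)
  rw [norm_div, Real.norm_of_nonneg hε.le, div_le_iff₀ hε]
  calc ‖G (ρe ε u) u - G (ρK u) u‖ ≤ B * (2 * ρK u * (ε * (C * Φ))) :=
        hmvt.trans (mul_le_mul_of_nonneg_left hsub hB0)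
    _ ≤ B * (2 * A * (ε * (C * Φ))) := by
        gcongr
        · exact (sub_nonneg.2 ((div_le_one hr).2 har.le)).trans hδ
        · exact (Real.le_norm_self _).trans (hA u hu)
    _ = B * (2 * A * (C * Φ)) * ε := by ring

theorem stmt3_general (n : ℕ) (G Gt : ℝ → Euc n → ℝ)
    (hG : ContinuousOn (fun p : ℝ × Euc n => G p.1 p.2) (Ioi 0 ×ˢ usphere n))
    (hGt : ContinuousOn (fun p : ℝ × Euc n => Gt p.1 p.2) (Ioi 0 ×ˢ usphere n))
    (hGtderiv : ∀ t ∈ Ioi (0:ℝ), ∀ u ∈ usphere n,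
      HasDerivAt (fun s => G s u) (Gt t u) t)
    (φ1 φ2 : ℝ → ℝ)
    (hφ1c : ContinuousOn φ1 (Ioi 0)) (hφ2c : ContinuousOn φ2 (Ioi 0))
    (hφ2pos : ∀ t > (0:ℝ), 0 < φ2 t)
    (hφ1mono : StrictMonoOn φ1 (Ioi 0)) (hφ2mono : StrictMonoOn φ2 (Ioi 0))
    (hφ1one : φ1 1 = 1)
    (d : ℝ) (hd : 0 < d) (hldiff : HasDerivWithinAt φ1 d (Iio 1) 1)
    (ρK ρL : Euc n → ℝ)
    (hρK : ContinuousOn ρK (usphere n)) (hρKpos : ∀ u ∈ usphere n, 0 < ρK u)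
    (hρL : ContinuousOn ρL (usphere n)) (hρLpos : ∀ u ∈ usphere n, 0 < ρL u)
    (ρe : ℝ → Euc n → ℝ)
    (hρe : ∀ ε > (0:ℝ), ∀ u ∈ usphere n, 0 < ρe ε u ∧
      φ1 (ρK u / ρe ε u) + ε * φ2 (ρL u / ρe ε u) = 1) :
    Tendsto (fun ε => ((∫ u, G (ρe ε u) u ∂smeas n) - ∫ u, G (ρK u) u ∂smeas n) / ε)
      (𝓝[>] (0:ℝ))
      (𝓝 ((1/d) * ∫ u, φ2 (ρL u / ρK u) * ρK u * Gt (ρK u) u ∂smeas n)) := by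
  have hS : IsCompact (usphere n) := isCompact_sphere 0 1
  have hSm : MeasurableSet (usphere n) := isClosed_sphere.measurableSet
  have hμS := hausdorffMeasure_usphere_ne_top n
  have : IsFiniteMeasure (smeas n) := isFiniteMeasure_restrict.2 hμS
  have hint : ∀ ρ : Euc n → ℝ, ContinuousOn ρ (usphere n) → (∀ u ∈ usphere n, 0 < ρ u) →
      Integrable (fun u => G (ρ u) u) (smeas n) := fun ρ hρ hpos =>
    (hG.comp (hρ.prodMk continuousOn_id) fun u hu => ⟨hpos u hu, hu⟩)
      |>.integrableOn_of_subset_isCompact hS hSm subset_rfl hμS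
  have hρe_cont : ∀ ε > 0, ContinuousOn (ρe ε) (usphere n) := fun ε hε =>
    continuousOn_of_strictAntiOn_of_apply_eq (F := fun u s => φ1 (ρK u / s) + ε * φ2 (ρL u / s))
      (fun s hs => (hφ1c.comp (hρK.div_const s) fun u hu => div_pos (hρKpos u hu) hs).add
        (continuousOn_const.mul (hφ2c.comp (hρL.div_const s) fun u hu => div_pos (hρLpos u hu) hs)))
      (fun u hu => strictAntiOn_add_mul_div hφ1mono hφ2mono.monotoneOn (hρKpos u hu) (hρLpos u hu)
        hε.le) (hρe ε hε)
  obtain ⟨M, hM⟩ := exists_forall_norm_sub_div_le hS hGt hGtderiv hφ1mono hφ1one hd hldiff hφ2c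
    hφ2mono.monotoneOn hφ2pos hρK hρKpos hρL hρLpos hρe
  rw [← integral_const_mul]
  refine tendsto_integral_sub_div (eventually_nhdsWithin_of_forall fun ε hε =>
      hint _ (hρe_cont ε hε) fun u hu => (hρe ε hε u hu).1) (hint ρK hρK hρKpos)
    (hM.mono fun ε h => ae_restrict_of_forall_mem hSm h)
    (ae_restrict_of_forall_mem hSm fun u hu => ?_)
  obtain ⟨hρ, hquot⟩ := tendsto_sub_div_of_add_mul_eq_one hφ1mono hφ1one hd hldiff hφ2c
    hφ2mono.monotoneOn hφ2pos (hρKpos u hu) (hρLpos u hu) fun ε hε => hρe ε hε u hu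
  convert (hGtderiv _ (hρKpos u hu) u hu).tendsto_comp_sub_div
    (hρ.mono_right (nhdsWithin_mono _ fun x hx => ne_of_gt hx)) hquot using 2
  ring

theorem stmt3 (n : ℕ) (G Gt : ℝ → Euc n → ℝ)
    (hG : ContinuousOn (fun p : ℝ × Euc n => G p.1 p.2) (Ioi 0 ×ˢ usphere n))
    (hGt : ContinuousOn (fun p : ℝ × Euc n => Gt p.1 p.2) (Ioi 0 ×ˢ usphere n))
    (hGtderiv : ∀ t ∈ Ioi (0:ℝ), ∀ u ∈ usphere n,
      HasDerivAt (fun s => G s u) (Gt t u) t)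
    (φ1 φ2 : ℝ → ℝ)
    (hφ1c : ContinuousOn φ1 (Ioi 0)) (hφ2c : ContinuousOn φ2 (Ioi 0))
    (hφ1pos : ∀ t > (0:ℝ), 0 < φ1 t) (hφ2pos : ∀ t > (0:ℝ), 0 < φ2 t)
    (hφ1mono : StrictMonoOn φ1 (Ioi 0)) (hφ2mono : StrictMonoOn φ2 (Ioi 0))
    (hφ1one : φ1 1 = 1) (hφ2one : φ2 1 = 1)
    (hφ1zero : Tendsto φ1 (𝓝[>] (0:ℝ)) (𝓝 0)) (hφ2zero : Tendsto φ2 (𝓝[>] (0:ℝ)) (𝓝 0))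
    (hφ1top : Tendsto φ1 atTop atTop) (hφ2top : Tendsto φ2 atTop atTop)
    (d : ℝ) (hd : 0 < d) (hldiff : HasDerivWithinAt φ1 d (Iio 1) 1)
    (ρK ρL : Euc n → ℝ)
    (hρK : ContinuousOn ρK (usphere n)) (hρKpos : ∀ u ∈ usphere n, 0 < ρK u)
    (hρL : ContinuousOn ρL (usphere n)) (hρLpos : ∀ u ∈ usphere n, 0 < ρL u)
    (ρe : ℝ → Euc n → ℝ)
    (hρe : ∀ ε > (0:ℝ), ∀ u ∈ usphere n, 0 < ρe ε u ∧
      φ1 (ρK u / ρe ε u) + ε * φ2 (ρL u / ρe ε u) = 1) :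
    Tendsto (fun ε => ((∫ u, G (ρe ε u) u ∂smeas n) - ∫ u, G (ρK u) u ∂smeas n) / ε)
      (𝓝[>] (0:ℝ))
      (𝓝 ((1/d) * ∫ u, φ2 (ρL u / ρK u) * ρK u * Gt (ρK u) u ∂smeas n)) :=
  stmt3_general n G Gt hG hGt hGtderiv φ1 φ2 hφ1c hφ2c hφ2pos hφ1mono hφ2mono hφ1one d hd hldiff ρK
    ρL hρK hρKpos hρL hρLpos ρe hρe
end
end

section
/- Let n ≥ 2, q ≠ 0, let φ:(0,∞)→(0,∞) be continuous with φ_q(t) := φ(t^{1/q}) strictly convex on (0,∞), and let ρ_K, ρ_L, ρ_Q ∈ C(S^{n-1}) be strictly positive. If equality holds in the dual Orlicz–Minkowski inequality Ṽ_{q,φ}(K,L,Q) = Ṽ_q(K,Q) · φ((Ṽ_q(L,Q)/Ṽ_q(K,Q))^{1/q}), then there is a constant c > 0 such that ρ_L(u) = c ρ_K(u) for all u ∈ S^{n-1}. -/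
open MeasureTheory Metric Set Filter
open scoped RealInnerProductSpace NNReal ENNReal Topology

noncomputable section

def Vq (n : ℕ) (q : ℝ) (ρK ρQ : Euc n → ℝ) : ℝ :=
  (1/(n:ℝ)) * ∫ u, ρK u ^ q * ρQ u ^ ((n:ℝ) - q) ∂smeas n

def Vqφ (n : ℕ) (q : ℝ) (φ : ℝ → ℝ) (ρK ρL ρQ : Euc n → ℝ) : ℝ :=
  (1/(n:ℝ)) * ∫ u, φ (ρL u / ρK u) * ρK u ^ q * ρQ u ^ ((n:ℝ) - q) ∂smeas n

open Module

/-!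
Write `W = ρ_K^q ρ_Q^{n-q}`, `f = (ρ_L/ρ_K)^q` and `G(t) = φ(t^{1/q})`. Then
`Ṽ_{q,φ}(K,L,Q) = (1/n) ∫ W·G(f)` and `Ṽ_q(L,Q) = (1/n) ∫ W·f`, so the assumed equality is the
equality case of Jensen's inequality for the strictly convex `G` and the finite measure `W dS`.
Hence `f` is a.e. constant; since `f` is continuous and the spherical Hausdorff measure charges
every cap, `f` is constant on the sphere. A cap charges `μH[n-1]` because the orthogonal projection
onto the tangent hyperplane is 1-Lipschitz and maps it onto a neighbourhood of the origin, and the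
sphere has finite measure because each small cap is a 2-Lipschitz graph over a ball of that
hyperplane.
-/

lemma abs_sqrt_sub_sqrt_le {a b : ℝ} (ha : 1 / 4 ≤ a) (hb : 1 / 4 ≤ b) :
    |√a - √b| ≤ |a - b| := by
  have hsa : 1 / 2 ≤ √a := Real.le_sqrt_of_sq_le (by linarith)
  have hsb : 1 / 2 ≤ √b := Real.le_sqrt_of_sq_le (by linarith)
  have hab : (√a - √b) * (√a + √b) = a - b := by
    linear_combination Real.sq_sqrt (by linarith : 0 ≤ a) - Real.sq_sqrt (by linarith : 0 ≤ b)
  calc |√a - √b| ≤ |√a - √b| * (√a + √b) :=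
        le_mul_of_one_le_right (abs_nonneg _) (by linarith)
    _ = |a - b| := by rw [← hab, abs_mul, abs_of_pos (by linarith : 0 < √a + √b)]

lemma abs_norm_sq_sub_norm_sq_le {F : Type*} [SeminormedAddCommGroup F] {x y : F}
    (hxy : ‖x‖ + ‖y‖ ≤ 1) : |‖x‖ ^ 2 - ‖y‖ ^ 2| ≤ ‖x - y‖ := by
  calc |‖x‖ ^ 2 - ‖y‖ ^ 2| = (‖x‖ + ‖y‖) * |‖x‖ - ‖y‖| := by
        rw [sq_sub_sq, abs_mul, abs_of_nonneg (by positivity)]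
    _ ≤ 1 * ‖x - y‖ := by gcongr; exact abs_norm_sub_norm_le x y
    _ = ‖x - y‖ := one_mul _

section SphereGraph

variable {E : Type*} [NormedAddCommGroup E] [InnerProductSpace ℝ E]

def sphereGraph (u : E) (v : (ℝ ∙ u)ᗮ) : E := v + √(1 - ‖v‖ ^ 2) • u

variable {u : E}

lemma norm_add_smul_sq (hu : ‖u‖ = 1) (v : (ℝ ∙ u)ᗮ) (t : ℝ) :
    ‖(v : E) + t • u‖ ^ 2 = ‖v‖ ^ 2 + t ^ 2 := by
  have hvu : ⟪(v : E), t • u⟫ = 0 := Submodule.inner_left_of_mem_orthogonal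
    (Submodule.smul_mem _ _ (Submodule.mem_span_singleton_self u)) v.2
  rw [sq, sq, sq, norm_add_sq_eq_norm_sq_add_norm_sq_of_inner_eq_zero _ _ hvu, norm_smul, hu,
    Real.norm_eq_abs, mul_one, abs_mul_abs_self, Submodule.coe_norm]

lemma norm_sphereGraph (hu : ‖u‖ = 1) {v : (ℝ ∙ u)ᗮ} (hv : ‖v‖ ≤ 1) :
    ‖sphereGraph u v‖ = 1 := by
  refine (pow_eq_one_iff_of_nonneg (norm_nonneg _) two_ne_zero).mp ?_
  rw [sphereGraph, norm_add_smul_sq hu, Real.sq_sqrt (by nlinarith [norm_nonneg v])]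
  ring

lemma orthogonalProjectionOnto_sphereGraph (v : (ℝ ∙ u)ᗮ) :
    (ℝ ∙ u)ᗮ.orthogonalProjectionOnto (sphereGraph u v) = v := by
  simp [sphereGraph, Submodule.orthogonalProjectionOnto_orthogonalComplement_singleton_eq_zero]

lemma dist_sphereGraph_le (hu : ‖u‖ = 1) {v : (ℝ ∙ u)ᗮ} (hv : ‖v‖ ≤ 1) :
    dist (sphereGraph u v) u ≤ 2 * ‖v‖ := by
  set t := √(1 - ‖v‖ ^ 2)
  have ht : t ^ 2 = 1 - ‖v‖ ^ 2 := Real.sq_sqrt (by nlinarith [norm_nonneg v])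
  have ht1 : t ≤ 1 := Real.sqrt_le_one.mpr (by nlinarith [norm_nonneg v])
  have ht0 : 0 ≤ t := Real.sqrt_nonneg _
  calc dist (sphereGraph u v) u = ‖(v : E) + (t - 1) • u‖ := by
        rw [dist_eq_norm, sphereGraph, sub_smul, one_smul, add_sub_assoc]
    _ ≤ ‖v‖ + |t - 1| := by
        grw [norm_add_le, norm_smul, Real.norm_eq_abs, hu, mul_one, Submodule.coe_norm]
    _ ≤ 2 * ‖v‖ := by
        rw [abs_of_nonpos (by linarith)]
        nlinarith [norm_nonneg v]

lemma lipschitzOnWith_sphereGraph (hu : ‖u‖ = 1) :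
    LipschitzOnWith 2 (sphereGraph u) (closedBall 0 (1 / 2)) := by
  refine LipschitzOnWith.of_dist_le_mul fun v hv w hw => ?_
  rw [mem_closedBall_zero_iff] at hv hw
  have hsqrt : |√(1 - ‖v‖ ^ 2) - √(1 - ‖w‖ ^ 2)| ≤ ‖v - w‖ := by
    grw [abs_sqrt_sub_sqrt_le (by nlinarith [norm_nonneg v]) (by nlinarith [norm_nonneg w]),
      abs_sub_comm, sub_sub_sub_cancel_left, abs_norm_sq_sub_norm_sq_le (by linarith)]
  calc dist (sphereGraph u v) (sphereGraph u w)
      = ‖(v - w : E) + (√(1 - ‖v‖ ^ 2) - √(1 - ‖w‖ ^ 2)) • u‖ := by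
        rw [dist_eq_norm, sphereGraph, sphereGraph, sub_smul]; abel_nf
    _ ≤ ‖v - w‖ + ‖v - w‖ := by
        grw [norm_add_le, norm_smul, Real.norm_eq_abs, hu, mul_one, hsqrt]
        exact le_rfl
    _ = (2 : ℝ≥0) * dist v w := by rw [dist_eq_norm]; push_cast; ring

lemma sphere_inter_ball_subset_image_sphereGraph (hu : ‖u‖ = 1) :
    sphere 0 1 ∩ ball u (1 / 2) ⊆ sphereGraph u '' closedBall 0 (1 / 2) := by
  rintro x ⟨hx, hxu⟩
  rw [mem_sphere_zero_iff_norm] at hx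
  rw [mem_ball, dist_eq_norm] at hxu
  set v := (ℝ ∙ u)ᗮ.orthogonalProjectionOnto x
  set c := ⟪u, x⟫
  have hdecomp : (v : E) + c • u = x := by
    have := Submodule.starProjection_add_starProjection_orthogonal (K := ℝ ∙ u) x
    rwa [Submodule.starProjection_singleton, hu, one_pow, RCLike.ofReal_one, div_one, add_comm,
      Submodule.starProjection_apply] at this
  have hc : 7 / 8 < c := by
    have := norm_sub_sq_real x u
    rw [hx, hu, real_inner_comm] at this
    nlinarith [norm_nonneg (x - u)]
  have hv : ‖v‖ ^ 2 = 1 - c ^ 2 := by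
    have := norm_add_smul_sq hu v c
    rw [hdecomp, hx] at this
    linarith
  refine ⟨v, mem_closedBall_zero_iff.mpr (by nlinarith [norm_nonneg v]), ?_⟩
  rw [sphereGraph, hv, sub_sub_cancel, Real.sqrt_sq (by linarith), hdecomp]

variable [FiniteDimensional ℝ E]

lemma cast_finrank_orthogonal_span_singleton (hu : u ≠ 0) :
    (finrank ℝ (ℝ ∙ u)ᗮ : ℝ) = finrank ℝ E - 1 := by
  rw [← (ℝ ∙ u).finrank_add_finrank_orthogonal, finrank_span_singleton hu]
  push_cast
  ring

variable [MeasurableSpace E] [BorelSpace E]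

theorem hausdorffMeasure_sphere_inter_ball_pos (hu : ‖u‖ = 1) {r : ℝ} (hr : 0 < r) :
    0 < μH[(finrank ℝ E : ℝ) - 1] (sphere (0 : E) 1 ∩ ball u r) := by
  have hu0 : u ≠ 0 := norm_ne_zero_iff.mp (by rw [hu]; exact one_ne_zero)
  set δ := min (r / 2) 1
  set π := (ℝ ∙ u)ᗮ.orthogonalProjectionOnto
  have hsub : ball 0 δ ⊆ π '' (sphere 0 1 ∩ ball u r) := by
    intro v hv
    rw [mem_ball_zero_iff] at hv
    have hv1 : ‖v‖ ≤ 1 := hv.le.trans (min_le_right _ _)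
    refine ⟨sphereGraph u v, ⟨mem_sphere_zero_iff_norm.mpr (norm_sphereGraph hu hv1), ?_⟩,
      orthogonalProjectionOnto_sphereGraph v⟩
    rw [mem_ball]
    linarith [dist_sphereGraph_le hu hv1, hv.trans_le (min_le_left _ _)]
  rw [← cast_finrank_orthogonal_span_singleton hu0]
  calc 0 < μH[(finrank ℝ (ℝ ∙ u)ᗮ : ℝ)] (ball 0 δ) := measure_ball_pos _ _ (by positivity)
    _ ≤ μH[_] (π '' (sphere 0 1 ∩ ball u r)) := measure_mono hsub
    _ ≤ (1 : ℝ≥0) ^ (finrank ℝ (ℝ ∙ u)ᗮ : ℝ) * μH[_] (sphere 0 1 ∩ ball u r) :=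
        (Submodule.lipschitzWith_orthogonalProjectionOnto _).hausdorffMeasure_image_le
          (Nat.cast_nonneg _) _
    _ = _ := by rw [ENNReal.coe_one, ENNReal.one_rpow, one_mul]

theorem hausdorffMeasure_sphere_inter_ball_lt_top (hu : ‖u‖ = 1) :
    μH[(finrank ℝ E : ℝ) - 1] (sphere (0 : E) 1 ∩ ball u (1 / 2)) < ∞ := by
  have hu0 : u ≠ 0 := norm_ne_zero_iff.mp (by rw [hu]; exact one_ne_zero)
  rw [← cast_finrank_orthogonal_span_singleton hu0]
  calc _ ≤ μH[_] (sphereGraph u '' closedBall 0 (1 / 2)) :=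
        measure_mono (sphere_inter_ball_subset_image_sphereGraph hu)
    _ ≤ (2 : ℝ≥0) ^ (finrank ℝ (ℝ ∙ u)ᗮ : ℝ) *
          μH[_] (closedBall (0 : (ℝ ∙ u)ᗮ) (1 / 2)) :=
        (lipschitzOnWith_sphereGraph hu).hausdorffMeasure_image_le (Nat.cast_nonneg _)
    _ < ∞ := ENNReal.mul_lt_top (by finiteness) (isCompact_closedBall _ _).measure_lt_top

theorem hausdorffMeasure_sphere_lt_top_s7 :
    μH[(finrank ℝ E : ℝ) - 1] (sphere (0 : E) 1) < ∞ := by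
  obtain ⟨t, ht⟩ := (isCompact_sphere (0 : E) 1).elim_finite_subcover
    (fun x : sphere (0 : E) 1 => ball (x : E) (1 / 2)) (fun _ => isOpen_ball)
    (fun x hx => mem_iUnion.2 ⟨⟨x, hx⟩, mem_ball_self (by norm_num)⟩)
  have hcover : sphere (0 : E) 1 ⊆ ⋃ x ∈ t, sphere 0 1 ∩ ball (x : E) (1 / 2) :=
      fun y hy => by
    obtain ⟨x, hxt, hyx⟩ := mem_iUnion₂.1 (ht hy)
    exact mem_iUnion₂.2 ⟨x, hxt, hy, hyx⟩
  calc _ ≤ ∑ x ∈ t, μH[(finrank ℝ E : ℝ) - 1] (sphere 0 1 ∩ ball (x : E) (1 / 2)) :=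
        (measure_mono hcover).trans (measure_biUnion_finset_le t _)
    _ < ∞ := ENNReal.sum_lt_top.2 fun x _ =>
        hausdorffMeasure_sphere_inter_ball_lt_top (mem_sphere_zero_iff_norm.mp x.2)

end SphereGraph

section WeightedJensen

variable {α : Type*} [MeasurableSpace α] {μ : Measure α} {w : α → ℝ}

lemma integral_withDensity_ofReal (hwi : Integrable w μ) (hw : ∀ᵐ x ∂μ, 0 ≤ w x)
    (f : α → ℝ) :
    ∫ x, f x ∂μ.withDensity (fun x => ENNReal.ofReal (w x)) = ∫ x, w x * f x ∂μ := by
  rw [integral_withDensity_eq_integral_toReal_smul₀ hwi.aemeasurable.ennreal_ofReal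
    (ae_of_all _ fun _ => ENNReal.ofReal_lt_top)]
  refine integral_congr_ae (hw.mono fun x hx => ?_)
  simp [ENNReal.toReal_ofReal hx]

lemma integrable_withDensity_ofReal_iff (hwi : Integrable w μ) (hw : ∀ᵐ x ∂μ, 0 ≤ w x)
    {f : α → ℝ} : Integrable f (μ.withDensity (fun x => ENNReal.ofReal (w x))) ↔
      Integrable (fun x => w x * f x) μ := by
  rw [integrable_withDensity_iff_integrable_smul₀' hwi.aemeasurable.ennreal_ofReal
    (ae_of_all _ fun _ => ENNReal.ofReal_lt_top)]
  refine integrable_congr (hw.mono fun x hx => ?_)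
  simp [ENNReal.toReal_ofReal hx]

theorem StrictConvexOn.ae_eq_of_integral_mul_eq {s : Set ℝ} {g : ℝ → ℝ} {f : α → ℝ}
    (hg : StrictConvexOn ℝ s g) (hgc : ContinuousOn g s) (hsc : IsClosed s)
    (hw : ∀ᵐ x ∂μ, 0 < w x) (hwi : Integrable w μ) (hfs : ∀ᵐ x ∂μ, f x ∈ s)
    (hfi : Integrable (fun x => w x * f x) μ) (hgi : Integrable (fun x => w x * g (f x)) μ)
    (heq : ∫ x, w x * g (f x) ∂μ =
      (∫ x, w x ∂μ) * g ((∫ x, w x * f x ∂μ) / ∫ x, w x ∂μ)) :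
    ∀ᵐ x ∂μ, f x = (∫ x, w x * f x ∂μ) / ∫ x, w x ∂μ := by
  rcases eq_zero_or_neZero μ with rfl | _
  · simp
  have hw0 : ∀ᵐ x ∂μ, 0 ≤ w x := hw.mono fun x hx => hx.le
  have hW : ∫ x, w x ∂μ ≠ 0 := fun h0 => by
    obtain ⟨x, hx, hx0⟩ := (hw.and ((integral_eq_zero_iff_of_nonneg_ae hw0 hwi).mp h0)).exists
    exact hx.ne' hx0
  set ν := μ.withDensity (fun x => ENNReal.ofReal (w x))
  have hν : ∀ h : α → ℝ, ∫ x, h x ∂ν = ∫ x, w x * h x ∂μ :=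
    integral_withDensity_ofReal hwi hw0
  have hνuniv : ν.real univ = ∫ x, w x ∂μ := by simpa using hν 1
  have havg : ∀ h : α → ℝ, ⨍ x, h x ∂ν = (∫ x, w x * h x ∂μ) / ∫ x, w x ∂μ := fun h => by
    rw [average_eq, hν, hνuniv, smul_eq_mul, inv_mul_eq_div]
  have : IsFiniteMeasure ν := isFiniteMeasure_withDensity_ofReal hwi.2
  have hνae : ∀ {p : α → Prop}, (∀ᵐ x ∂ν, p x) → ∀ᵐ x ∂μ, p x := fun hp => by
    filter_upwards [(ae_withDensity_iff' hwi.aemeasurable.ennreal_ofReal).mp hp, hw]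
      with x hx hwx
    exact hx (by simpa using hwx)
  rcases hg.ae_eq_const_or_map_average_lt hgc hsc
    ((withDensity_absolutelyContinuous _ _).ae_le hfs)
    ((integrable_withDensity_ofReal_iff hwi hw0).mpr hfi)
    ((integrable_withDensity_ofReal_iff hwi hw0).mpr hgi) with hconst | hlt
  · rw [← havg]
    exact hνae hconst
  · rw [havg, havg, heq, mul_div_cancel_left₀ _ hW] at hlt
    exact absurd hlt (lt_irrefl _)

end WeightedJensen

theorem ContinuousOn.eq_const_of_ae_eq {X β : Type*} [PseudoMetricSpace X] [MeasurableSpace X]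
    [TopologicalSpace β] [T1Space β] {μ : Measure X} {s : Set X} {f : X → β} {c : β}
    (hf : ContinuousOn f s) (hpos : ∀ x ∈ s, ∀ r > 0, μ (s ∩ ball x r) ≠ 0)
    (hfc : ∀ᵐ x ∂μ, f x = c) : ∀ x ∈ s, f x = c := by
  by_contra! ⟨x, hxs, hx⟩
  obtain ⟨r, hr, hball⟩ := Metric.mem_nhdsWithin_iff.mp (hf x hxs (isOpen_ne.mem_nhds hx))
  exact hpos x hxs r hr (measure_mono_null (fun y hy => hball ⟨hy.2, hy.1⟩) (ae_iff.mp hfc))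

theorem ContinuousOn.integrable_of_isCompact {X : Type*} [TopologicalSpace X]
    [MeasurableSpace X] [OpensMeasurableSpace X] {μ : Measure X} [IsFiniteMeasure μ] {s : Set X}
    {f : X → ℝ} (hf : ContinuousOn f s) (hs : IsCompact s) (hsm : MeasurableSet s)
    (hμs : ∀ᵐ x ∂μ, x ∈ s) : Integrable f μ := by
  obtain ⟨C, hC⟩ := hs.exists_bound_of_continuousOn hf
  rw [← Measure.restrict_eq_self_of_ae_mem hμs]
  exact .of_bound (hf.aestronglyMeasurable hsm) C ((ae_restrict_mem hsm).mono hC)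

theorem StrictConvexOn.exists_eq_const_of_integral_mul_eq {X : Type*} [MetricSpace X]
    [MeasurableSpace X] [OpensMeasurableSpace X] {μ : Measure X} [IsFiniteMeasure μ] {s : Set X}
    {U : Set ℝ} {g : ℝ → ℝ} {w f : X → ℝ} (hg : StrictConvexOn ℝ U g) (hU : IsOpen U)
    (hs : IsCompact s) (hμs : ∀ᵐ x ∂μ, x ∈ s) (hsupp : ∀ x ∈ s, ∀ r > 0, μ (s ∩ ball x r) ≠ 0)
    (hwc : ContinuousOn w s) (hw : ∀ x ∈ s, 0 < w x) (hfc : ContinuousOn f s)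
    (hfU : ∀ x ∈ s, f x ∈ U)
    (heq : ∫ x, w x * g (f x) ∂μ =
      (∫ x, w x ∂μ) * g ((∫ x, w x * f x ∂μ) / ∫ x, w x ∂μ)) :
    ∃ m, ∀ x ∈ s, f x = m := by
  rcases s.eq_empty_or_nonempty with rfl | hne
  · exact ⟨0, by simp⟩
  -- Jensen's equality case needs a closed domain: shrink `U` to the compact range of `f`
  obtain ⟨xa, hxa, hmin⟩ := hs.exists_isMinOn hne hfc
  obtain ⟨xb, hxb, hmax⟩ := hs.exists_isMaxOn hne hfc
  have hfs : ∀ x ∈ s, f x ∈ Icc (f xa) (f xb) := fun x hx => ⟨hmin hx, hmax hx⟩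
  have hIcc : Icc (f xa) (f xb) ⊆ U := hg.1.ordConnected.out (hfU xa hxa) (hfU xb hxb)
  have hgc : ContinuousOn g (Icc (f xa) (f xb)) := (hg.convexOn.continuousOn hU).mono hIcc
  have hint {h : X → ℝ} (hh : ContinuousOn h s) : Integrable h μ :=
    hh.integrable_of_isCompact hs hs.isClosed.measurableSet hμs
  exact ⟨_, hfc.eq_const_of_ae_eq hsupp <|
    (hg.subset hIcc (convex_Icc _ _)).ae_eq_of_integral_mul_eq hgc isClosed_Icc (hμs.mono hw)
      (hint hwc) (hμs.mono hfs) (hint (hwc.mul hfc)) (hint (hwc.mul (hgc.comp hfc hfs))) heq⟩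

section SphereMeasure

variable {n : ℕ}

lemma isCompact_usphere : IsCompact (usphere n) := isCompact_sphere 0 1

lemma measurableSet_usphere : MeasurableSet (usphere n) := isClosed_sphere.measurableSet

instance : IsFiniteMeasure (smeas n) :=
  ⟨by simpa [smeas, usphere] using hausdorffMeasure_sphere_lt_top_s7 (E := Euc n)⟩

lemma ae_mem_usphere : ∀ᵐ u ∂smeas n, u ∈ usphere n := ae_restrict_mem measurableSet_usphere

lemma smeas_usphere_inter_ball_ne_zero {u : Euc n} (hu : u ∈ usphere n) {r : ℝ} (hr : 0 < r) :
    smeas n (usphere n ∩ ball u r) ≠ 0 := by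
  rw [smeas, Measure.restrict_apply' measurableSet_usphere, inter_right_comm, inter_self]
  simpa [usphere] using
    (hausdorffMeasure_sphere_inter_ball_pos (mem_sphere_zero_iff_norm.mp hu) hr).ne'

end SphereMeasure

section DualVolumes

variable {n : ℕ} {q : ℝ} {ρK ρL ρQ : Euc n → ℝ}

lemma Vq_eq_integral_mul_div_rpow (hρK : ∀ u ∈ usphere n, 0 < ρK u)
    (hρL : ∀ u ∈ usphere n, 0 ≤ ρL u) :
    Vq n q ρL ρQ =
      1 / n * ∫ u, ρK u ^ q * ρQ u ^ ((n : ℝ) - q) * (ρL u / ρK u) ^ q ∂smeas n := by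
  refine congrArg _ (integral_congr_ae (ae_mem_usphere.mono fun u hu => ?_))
  rw [mul_right_comm, ← Real.mul_rpow (hρK u hu).le (div_nonneg (hρL u hu) (hρK u hu).le),
    mul_div_cancel₀ _ (hρK u hu).ne']

lemma Vqφ_eq_integral_mul_div_rpow (hq : q ≠ 0) (φ : ℝ → ℝ) (hρK : ∀ u ∈ usphere n, 0 < ρK u)
    (hρL : ∀ u ∈ usphere n, 0 ≤ ρL u) :
    Vqφ n q φ ρK ρL ρQ = 1 / n * ∫ u, ρK u ^ q * ρQ u ^ ((n : ℝ) - q) *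
      φ (((ρL u / ρK u) ^ q) ^ (1 / q)) ∂smeas n := by
  refine congrArg _ (integral_congr_ae (ae_mem_usphere.mono fun u hu => ?_))
  rw [one_div, Real.rpow_rpow_inv (div_nonneg (hρL u hu) (hρK u hu).le) hq]
  ring

end DualVolumes

theorem stmt7_general (n : ℕ) (hn : 2 ≤ n) (q : ℝ) (hq : q ≠ 0) (φ : ℝ → ℝ)
    (hconv : StrictConvexOn ℝ (Ioi 0) (fun t : ℝ => φ (t ^ (1/q))))
    (ρK ρL ρQ : Euc n → ℝ)
    (hρK : ContinuousOn ρK (usphere n)) (hρKpos : ∀ u ∈ usphere n, 0 < ρK u)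
    (hρL : ContinuousOn ρL (usphere n)) (hρLpos : ∀ u ∈ usphere n, 0 < ρL u)
    (hρQ : ContinuousOn ρQ (usphere n)) (hρQpos : ∀ u ∈ usphere n, 0 < ρQ u)
    (heq : Vqφ n q φ ρK ρL ρQ = Vq n q ρK ρQ * φ ((Vq n q ρL ρQ / Vq n q ρK ρQ) ^ (1/q))) :
    ∃ c : ℝ, 0 < c ∧ ∀ u ∈ usphere n, ρL u = c * ρK u := by
  have : NeZero n := ⟨by omega⟩
  have hn0 : (1 / n : ℝ) ≠ 0 := one_div_ne_zero (Nat.cast_ne_zero.mpr (NeZero.ne n))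
  have hρL0 u (hu : u ∈ usphere n) : 0 ≤ ρL u := (hρLpos u hu).le
  rw [Vqφ_eq_integral_mul_div_rpow hq φ hρKpos hρL0, Vq_eq_integral_mul_div_rpow hρKpos hρL0,
    Vq, mul_div_mul_left _ _ hn0, mul_assoc] at heq
  have hratio u (hu : u ∈ usphere n) : 0 < ρL u / ρK u := div_pos (hρLpos u hu) (hρKpos u hu)
  obtain ⟨m, hm⟩ := hconv.exists_eq_const_of_integral_mul_eq (f := fun u => (ρL u / ρK u) ^ q)
    isOpen_Ioi isCompact_usphere ae_mem_usphere
    (fun u hu r hr => smeas_usphere_inter_ball_ne_zero hu hr)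
    ((hρK.rpow_const fun u hu => .inl (hρKpos u hu).ne').mul
      (hρQ.rpow_const fun u hu => .inl (hρQpos u hu).ne'))
    (fun u hu => mul_pos (Real.rpow_pos_of_pos (hρKpos u hu) q)
      (Real.rpow_pos_of_pos (hρQpos u hu) _))
    ((hρL.div hρK fun u hu => (hρKpos u hu).ne').rpow_const fun u hu => .inl (hratio u hu).ne')
    (fun u hu => Real.rpow_pos_of_pos (hratio u hu) q) (mul_left_cancel₀ hn0 heq)
  obtain ⟨u₀, hu₀⟩ : (usphere n).Nonempty := NormedSpace.sphere_nonempty.mpr zero_le_one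
  have hm0 : 0 < m := hm u₀ hu₀ ▸ Real.rpow_pos_of_pos (hratio u₀ hu₀) q
  refine ⟨m ^ (1 / q), Real.rpow_pos_of_pos hm0 _, fun u hu => ?_⟩
  rw [← hm u hu, one_div, Real.rpow_rpow_inv (hratio u hu).le hq,
    div_mul_cancel₀ _ (hρKpos u hu).ne']

theorem stmt7 (n : ℕ) (hn : 2 ≤ n) (q : ℝ) (hq : q ≠ 0) (φ : ℝ → ℝ)
    (hφc : ContinuousOn φ (Ioi 0)) (hφpos : ∀ t > (0:ℝ), 0 < φ t)
    (hconv : StrictConvexOn ℝ (Ioi 0) (fun t : ℝ => φ (t ^ (1/q))))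
    (ρK ρL ρQ : Euc n → ℝ)
    (hρK : ContinuousOn ρK (usphere n)) (hρKpos : ∀ u ∈ usphere n, 0 < ρK u)
    (hρL : ContinuousOn ρL (usphere n)) (hρLpos : ∀ u ∈ usphere n, 0 < ρL u)
    (hρQ : ContinuousOn ρQ (usphere n)) (hρQpos : ∀ u ∈ usphere n, 0 < ρQ u)
    (heq : Vqφ n q φ ρK ρL ρQ = Vq n q ρK ρQ * φ ((Vq n q ρL ρQ / Vq n q ρK ρQ) ^ (1/q))) :
    ∃ c : ℝ, 0 < c ∧ ∀ u ∈ usphere n, ρL u = c * ρK u :=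
  stmt7_general n hn q hq φ hconv ρK ρL ρQ hρK hρKpos hρL hρLpos hρQ hρQpos heq
end
end
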